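/- The sequence of sequential distributional topological complexities is non-decreasing: for every m ≥ 2 and path-connected metric space X, dTC_m(X) ≤ dTC_{m+1}(X). -/

import Mathlib

open MeasureTheory unitInterval

noncomputable section

/-- The path space `P(X) = C([0,1], X)` with the compact-open topology. -/
abbrev PathSp (X : Type*) [TopologicalSpace X] : Type _ := C(unitInterval, X)

/-- The space `B_n(Z)` of probability measures on a metric space `Z` supported on at most
`n` points, as a subspace of the space of probability measures with the Lévy–Prokhorov metric. -/
def Bmeas (n : ℕ) (Z : Type*) [MetricSpace Z] : Type _ :=
  letI : MeasurableSpace Z := borel Z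
  {μ : LevyProkhorov (ProbabilityMeasure Z) //
    ∃ S : Finset Z, S.card ≤ n ∧ (LevyProkhorov.toMeasureEquiv μ : ProbabilityMeasure Z) (↑S : Set Z) = 1}

noncomputable instance (n : ℕ) (Z : Type*) [MetricSpace Z] : TopologicalSpace (Bmeas n Z) :=
  letI : MeasurableSpace Z := borel Z
  haveI : BorelSpace Z := ⟨rfl⟩
  instTopologicalSpaceSubtype

/-- The underlying probability measure of an element of `B_n(Z)`. -/
def Bmeas.meas {n : ℕ} {Z : Type*} [MetricSpace Z] (μ : Bmeas n Z) :
    @ProbabilityMeasure Z (borel Z) :=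
  LevyProkhorov.toMeasureEquiv μ.1

/-- `μ ∈ B_n(Z)` is supported on the set `A`. -/
def DistributedOn {Z : Type*} [MetricSpace Z] {n : ℕ} (μ : Bmeas n Z) (A : Set Z) : Prop :=
  ∃ S : Finset Z, (↑S : Set Z) ⊆ A ∧ Bmeas.meas μ (↑S : Set Z) = 1

/-- The time points `t_j = j/(m-1)`, `j = 0, …, m-1`, in `[0,1]`. -/
def tpt (m : ℕ) (j : Fin m) : unitInterval :=
  Set.projIcc 0 1 zero_le_one ((j : ℝ) / ((m : ℝ) - 1))

/-- A `k`-distributed `m`-navigation algorithm on `X`. -/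
def IsNavAlg (m k : ℕ) {X : Type*} [MetricSpace X]
    (s : (Fin m → X) → Bmeas k (PathSp X)) : Prop :=
  Continuous s ∧ ∀ x : Fin m → X,
    DistributedOn (s x) {φ : PathSp X | ∀ j : Fin m, φ (tpt m j) = x j}

/-- The `m`-th sequential distributional topological complexity. -/
noncomputable def dTC (m : ℕ) (X : Type*) [MetricSpace X] : ℕ∞ :=
  sInf {c : ℕ∞ | ∃ k : ℕ, c = k ∧
    ∃ s : (Fin m → X) → Bmeas (k + 1) (PathSp X), IsNavAlg m (k + 1) s}

/-- A `k`-contraction of `Y` to the point `y₀`. -/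
def IsContr (k : ℕ) {Y : Type*} [MetricSpace Y] (y₀ : Y)
    (H : Y → Bmeas k (PathSp Y)) : Prop :=
  Continuous H ∧ ∀ y : Y,
    DistributedOn (H y) {φ : PathSp Y | φ 0 = y ∧ φ 1 = y₀}

/-- The distributional Lusternik–Schnirelmann category. -/
noncomputable def dcat (Y : Type*) [MetricSpace Y] : ℕ∞ :=
  sInf {c : ℕ∞ | ∃ k : ℕ, c = k ∧
    ∃ (y₀ : Y) (H : Y → Bmeas (k + 1) (PathSp Y)), IsContr (k + 1) y₀ H}

/-- The classical `m`-th sequential topological complexity. -/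
noncomputable def TCcl (m : ℕ) (X : Type*) [TopologicalSpace X] : ℕ∞ :=
  sInf {c : ℕ∞ | ∃ k : ℕ, c = k ∧
    ∃ (U : Fin (k + 1) → Set (Fin m → X)) (s : ∀ i : Fin (k + 1), C(U i, PathSp X)),
      (∀ i, IsOpen (U i)) ∧ (∀ x, ∃ i, x ∈ U i) ∧
      ∀ (i : Fin (k + 1)) (x : U i) (j : Fin m), (s i x) (tpt m j) = (x : Fin m → X) j}

/-!
Given an `(m+1)`-navigation algorithm `s` and any point `x₀`, feed `s` the sequence `x` extended
by `x₀` and reparametrize every path by `t ↦ t (m - 1) / m`, which sends the time `j / (m - 1)`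
to `j / m`; the new paths pass through `x_j` at the times required of an `m`-navigation algorithm.
Precomposition with a reparametrization is `1`-Lipschitz on the path space, and pushing measures
forward along a `1`-Lipschitz map is `1`-Lipschitz for the Lévy–Prokhorov metric, so the new
algorithm is again continuous; pushforward does not increase the number of support points.
-/

open Metric Set

namespace MeasureTheory

section LevyProkhorov

variable {Z Z' : Type*} [MeasurableSpace Z] [MeasurableSpace Z'] [PseudoMetricSpace Z]
  [PseudoMetricSpace Z'] [OpensMeasurableSpace Z] [BorelSpace Z']

lemma levyProkhorovEDist_map_le {f : Z → Z'} (hf : LipschitzWith 1 f) (μ ν : Measure Z) :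
    levyProkhorovEDist (μ.map f) (ν.map f) ≤ levyProkhorovEDist μ ν := by
  have hfm : Measurable f := hf.continuous.measurable
  have thickening_preimage (ε : ℝ) (B : Set Z') :
      thickening ε (f ⁻¹' B) ⊆ f ⁻¹' thickening ε B := fun x hx ↦ by
    obtain ⟨z, hz, hxz⟩ := mem_thickening_iff.mp hx
    exact mem_thickening_iff.mpr ⟨f z, hz, (hf.dist_le_mul x z).trans_lt (by simpa using hxz)⟩
  have one_side (μ ν : Measure Z) (ε : ENNReal) (B : Set Z') (hε : levyProkhorovEDist μ ν < ε)
      (hB : MeasurableSet B) : μ.map f B ≤ ν.map f (thickening ε.toReal B) + ε := by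
    rw [Measure.map_apply hfm hB, Measure.map_apply hfm isOpen_thickening.measurableSet]
    exact (left_measure_le_of_levyProkhorovEDist_lt hε (hfm hB)).trans
      (add_le_add_left (measure_mono (thickening_preimage _ _)) _)
  refine levyProkhorovEDist_le_of_forall _ _ _ fun ε B hε _ hB ↦ ⟨one_side μ ν ε B hε hB, ?_⟩
  exact one_side ν μ ε B (levyProkhorovEDist_comm μ ν ▸ hε) hB

lemma LevyProkhorov.lipschitzWith_one_probabilityMeasure_map {f : Z → Z'}
    (hf : LipschitzWith 1 f) :
    LipschitzWith 1 fun μ : LevyProkhorov (ProbabilityMeasure Z) ↦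
      toMeasureEquiv.symm ((toMeasureEquiv μ).map hf.continuous.measurable.aemeasurable) := by
  refine LipschitzWith.of_dist_le_mul fun μ ν ↦ ?_
  rw [NNReal.coe_one, one_mul, dist_probabilityMeasure_def, dist_probabilityMeasure_def]
  exact ENNReal.toReal_mono (levyProkhorovEDist_ne_top _ _) (levyProkhorovEDist_map_le hf _ _)

end LevyProkhorov

lemma ProbabilityMeasure.map_apply_eq_one_of_mapsTo {Z Z' : Type*} [MeasurableSpace Z]
    [MeasurableSpace Z'] {μ : ProbabilityMeasure Z} {f : Z → Z'} (hf : AEMeasurable f μ)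
    {A : Set Z} {B : Set Z'} (hA : μ A = 1) (hAB : MapsTo f A B) (hB : MeasurableSet B) :
    μ.map hf B = 1 := by
  rw [ProbabilityMeasure.map_apply _ hf hB]
  exact le_antisymm (ProbabilityMeasure.apply_le_one _ _) (hA ▸ μ.apply_mono hAB)

end MeasureTheory

namespace Bmeas

variable {Z Z' : Type*} [MetricSpace Z] [MetricSpace Z'] {n : ℕ}

def map (f : Z → Z') (hf : Continuous f) (μ : Bmeas n Z) : Bmeas n Z' :=
  letI := borel Z
  letI := borel Z'
  haveI : BorelSpace Z := ⟨rfl⟩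
  haveI : BorelSpace Z' := ⟨rfl⟩
  ⟨LevyProkhorov.toMeasureEquiv.symm ((meas μ).map hf.measurable.aemeasurable), by
    classical
    obtain ⟨S, hcard, hS⟩ := μ.2
    refine ⟨S.image f, Finset.card_image_le.trans hcard, ?_⟩
    rw [Equiv.apply_symm_apply]
    exact ProbabilityMeasure.map_apply_eq_one_of_mapsTo _ hS
      (fun _ ↦ Finset.mem_image_of_mem f) (Finset.measurableSet _)⟩

lemma continuous_map {f : Z → Z'} (hf : LipschitzWith 1 f) :
    Continuous (map (n := n) f hf.continuous) := by
  borelize Z Z'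
  exact ((LevyProkhorov.lipschitzWith_one_probabilityMeasure_map hf).continuous.comp
    continuous_subtype_val).subtype_mk _

end Bmeas

lemma DistributedOn.map {Z Z' : Type*} [MetricSpace Z] [MetricSpace Z'] {n : ℕ} {μ : Bmeas n Z}
    {A : Set Z} {B : Set Z'} (hμ : DistributedOn μ A) {f : Z → Z'} (hf : Continuous f)
    (hAB : MapsTo f A B) : DistributedOn (μ.map f hf) B := by
  classical
  borelize Z Z'
  obtain ⟨S, hSA, hS⟩ := hμ
  refine ⟨S.image f, ?_, ?_⟩
  · rw [Finset.coe_image]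
    exact (hAB.mono_left hSA).image_subset
  · exact ProbabilityMeasure.map_apply_eq_one_of_mapsTo hf.measurable.aemeasurable hS
      (fun _ ↦ Finset.mem_image_of_mem f) (Finset.measurableSet _)

lemma ContinuousMap.lipschitzWith_one_comp_right {α β γ : Type*} [TopologicalSpace α]
    [CompactSpace α] [TopologicalSpace β] [CompactSpace β] [PseudoMetricSpace γ] (g : C(α, β)) :
    LipschitzWith 1 fun φ : C(β, γ) ↦ φ.comp g :=
  LipschitzWith.of_dist_le_mul fun φ ψ ↦ by
    rw [NNReal.coe_one, one_mul]
    exact (ContinuousMap.dist_le dist_nonneg).mpr fun t ↦ ContinuousMap.dist_apply_le_dist (g t)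

/-- The `projIcc` only spares proving that `t (m - 1) / m` lies in `[0, 1]`. -/
def shrinkTime (m : ℕ) : C(I, I) :=
  ⟨fun t ↦ projIcc 0 1 zero_le_one (t * ((m : ℝ) - 1) / m), continuous_projIcc.comp (by fun_prop)⟩

lemma shrinkTime_tpt {m : ℕ} (j : Fin m) : shrinkTime m (tpt m j) = tpt (m + 1) j.castSucc := by
  have hcancel : (j : ℝ) / ((m : ℝ) - 1) * ((m : ℝ) - 1) = j := by
    rcases eq_or_ne ((m : ℝ) - 1) 0 with h | h
    · have : m = 1 := by exact_mod_cast sub_eq_zero.mp h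
      have : (j : ℕ) = 0 := by omega
      simp [this]
    · exact div_mul_cancel₀ _ h
  have hj : (j : ℝ) ≤ (m : ℝ) - 1 := by
    rw [le_sub_iff_add_le]
    exact_mod_cast j.isLt
  have hmem : (j : ℝ) / ((m : ℝ) - 1) ∈ Icc (0 : ℝ) 1 :=
    ⟨div_nonneg j.val.cast_nonneg (j.val.cast_nonneg.trans hj),
      div_le_one_of_le₀ hj (j.val.cast_nonneg.trans hj)⟩
  simp only [shrinkTime, tpt, ContinuousMap.coe_mk, projIcc_of_mem _ hmem]
  congr 1
  rw [hcancel, Fin.val_castSucc]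
  push_cast
  ring

lemma IsNavAlg.restrict {m k : ℕ} {X : Type*} [MetricSpace X]
    {s : (Fin (m + 1) → X) → Bmeas k (PathSp X)} (hs : IsNavAlg (m + 1) k s) (x₀ : X) :
    IsNavAlg m k fun x ↦ (s (Fin.snoc x x₀)).map (fun φ ↦ φ.comp (shrinkTime m))
      (ContinuousMap.lipschitzWith_one_comp_right _).continuous :=
  ⟨(Bmeas.continuous_map (ContinuousMap.lipschitzWith_one_comp_right _)).comp
      (hs.1.comp (by fun_prop)),
    fun x ↦ (hs.2 _).map _ fun φ hφ j ↦ by simpa [shrinkTime_tpt] using hφ j.castSucc⟩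

theorem dTC_mono_general (m : ℕ) (X : Type) [MetricSpace X] [PathConnectedSpace X] :
    dTC m X ≤ dTC (m + 1) X := by
  obtain ⟨x₀⟩ := PathConnectedSpace.nonempty (X := X)
  refine sInf_le_sInf ?_
  rintro _ ⟨k, rfl, s, hs⟩
  exact ⟨k, rfl, _, hs.restrict x₀⟩

/-- The sequence `m ↦ dTC_m(X)` is non-decreasing for `m ≥ 2`. -/
theorem dTC_mono (m : ℕ) (hm : 2 ≤ m) (X : Type) [MetricSpace X] [PathConnectedSpace X] :
    dTC m X ≤ dTC (m + 1) X :=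
  dTC_mono_general m X
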